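/- Let a ≥ 0, b > 0 and α > −2, and set l = (2/(b(α+2))) a^{(α+2)/2} and f(x₂) = b^{−α/(α+2)} ((α+2)/2 · x₂)^{2/(α+2)} − a/b for x₂ > l. If v ∈ C²(ℝ × (0,∞)) satisfies (a + b η)^α v_{ξξ} + v_{ηη} = 0 in ℝ × (0,∞), then the function ṽ(x₁, x₂) := v(x₁, f(x₂)) satisfies ṽ_{11} + ṽ_{22} + (α/(α+2)) x₂^{−1} ṽ_2 = 0 in ℝ × (l, ∞), equivalently div( x₂^{α/(α+2)} ∇ṽ ) = 0 in ℝ × (l, ∞). -/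

import Mathlib

/-!
Write `ṽ = v ∘ F` with `F (x₁, x₂) = (x₁, f x₂)`. The chain rule gives `ṽ₁₁ = v_ξξ ∘ F`,
`ṽ₂ = f' · v_η ∘ F` and `ṽ₂₂ = f'² · v_ηη ∘ F + f'' · v_η ∘ F`. The profile has
`f' x = (b (α+2)/2 · x)^(-α/(α+2))`, so `x f'' = -(α/(α+2)) f'` cancels the first-order terms,
and `f'² (a + b f)^α = 1` turns `ṽ₁₁ + f'² v_ηη ∘ F` into `f'²` times the equation for `v`.
-/

open Real

/-- Partial derivative in the first-coordinate direction. -/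
noncomputable def pdx (u : ℝ × ℝ → ℝ) (p : ℝ × ℝ) : ℝ := fderiv ℝ u p (1, 0)

/-- Partial derivative in the second-coordinate direction. -/
noncomputable def pdy (u : ℝ × ℝ → ℝ) (p : ℝ × ℝ) : ℝ := fderiv ℝ u p (0, 1)

open Filter Topology

theorem hasDerivAt_const_mul_rpow {c r x : ℝ} (hcx : 0 < c * x) :
    HasDerivAt (fun y => (c * y) ^ r) (r / x * (c * x) ^ r) x := by
  have hx : x ≠ 0 := by rintro rfl; simp at hcx
  have hc : c ≠ 0 := by rintro rfl; simp at hcx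
  convert ((hasDerivAt_id' x).const_mul c).rpow_const (p := r) (Or.inl hcx.ne') using 1
  rw [Real.rpow_sub_one hcx.ne']
  field_simp

section PartialDerivatives

variable {u w : ℝ × ℝ → ℝ} {p : ℝ × ℝ}

theorem Filter.EventuallyEq.pdx (h : u =ᶠ[𝓝 p] w) : pdx u =ᶠ[𝓝 p] pdx w :=
  h.fderiv.mono fun _ hq => congrArg (fun L : ℝ × ℝ →L[ℝ] ℝ => L (1, 0)) hq

theorem Filter.EventuallyEq.pdy (h : u =ᶠ[𝓝 p] w) : pdy u =ᶠ[𝓝 p] pdy w :=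
  h.fderiv.mono fun _ hq => congrArg (fun L : ℝ × ℝ →L[ℝ] ℝ => L (0, 1)) hq

theorem ContDiffAt.differentiableAt_pdx (hu : ContDiffAt ℝ 2 u p) :
    DifferentiableAt ℝ (pdx u) p :=
  ((hu.fderiv_right (m := 1) (by norm_num)).differentiableAt one_ne_zero).clm_apply
    (differentiableAt_const _)

theorem ContDiffAt.differentiableAt_pdy (hu : ContDiffAt ℝ 2 u p) :
    DifferentiableAt ℝ (pdy u) p :=
  ((hu.fderiv_right (m := 1) (by norm_num)).differentiableAt one_ne_zero).clm_apply
    (differentiableAt_const _)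

theorem pdy_mul (hu : DifferentiableAt ℝ u p) (hw : DifferentiableAt ℝ w p) :
    pdy (fun q => u q * w q) p = pdy u p * w p + u p * pdy w p := by
  simp only [pdy, fderiv_fun_mul hu hw]
  simp
  ring

theorem pdy_comp_snd {h : ℝ → ℝ} {d : ℝ} (hh : HasDerivAt h d p.2) :
    pdy (fun q => h q.2) p = d := by
  have hd : HasFDerivAt (fun q : ℝ × ℝ => h q.2)
      (((1 : ℝ →L[ℝ] ℝ).smulRight d).comp (ContinuousLinearMap.snd ℝ ℝ ℝ)) p :=
    hh.hasFDerivAt.comp p hasFDerivAt_snd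
  simp [pdy, hd.fderiv]

end PartialDerivatives

section VerticalReparametrization

variable {v : ℝ × ℝ → ℝ} {g : ℝ → ℝ} {d : ℝ} {p : ℝ × ℝ}

theorem hasFDerivAt_vertical (hg : HasDerivAt g d p.2) :
    HasFDerivAt (fun q : ℝ × ℝ => (q.1, g q.2))
      ((ContinuousLinearMap.fst ℝ ℝ ℝ).prod
        (((1 : ℝ →L[ℝ] ℝ).smulRight d).comp (ContinuousLinearMap.snd ℝ ℝ ℝ))) p :=
  hasFDerivAt_fst.prodMk (hg.hasFDerivAt.comp p hasFDerivAt_snd)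

theorem pdx_comp_vertical (hv : DifferentiableAt ℝ v (p.1, g p.2)) (hg : HasDerivAt g d p.2) :
    pdx (fun q => v (q.1, g q.2)) p = pdx v (p.1, g p.2) := by
  have hd : HasFDerivAt (fun q => v (q.1, g q.2)) _ p :=
    hv.hasFDerivAt.comp p (hasFDerivAt_vertical hg)
  simp [pdx, hd.fderiv]

theorem pdy_comp_vertical (hv : DifferentiableAt ℝ v (p.1, g p.2)) (hg : HasDerivAt g d p.2) :
    pdy (fun q => v (q.1, g q.2)) p = d * pdy v (p.1, g p.2) := by
  have hd : HasFDerivAt (fun q => v (q.1, g q.2)) _ p :=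
    hv.hasFDerivAt.comp p (hasFDerivAt_vertical hg)
  have h : ((0 : ℝ), d) = d • ((0 : ℝ), (1 : ℝ)) := by simp
  simp only [pdy, hd.fderiv, ContinuousLinearMap.comp_apply]
  simp
  rw [h, map_smul, smul_eq_mul]

end VerticalReparametrization

section SecondOrder

variable {v : ℝ × ℝ → ℝ} {g g' : ℝ → ℝ} {g'' : ℝ} {p : ℝ × ℝ}

theorem eventually_differentiableAt_vertical (hv : ContDiffAt ℝ 1 v (p.1, g p.2))
    (hg : ∀ᶠ y in 𝓝 p.2, HasDerivAt g (g' y) y) :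
    ∀ᶠ q in 𝓝 p, DifferentiableAt ℝ v (q.1, g q.2) ∧ HasDerivAt g (g' q.2) q.2 := by
  have hF : ContinuousAt (fun q : ℝ × ℝ => (q.1, g q.2)) p :=
    continuousAt_fst.prodMk (hg.self_of_nhds.continuousAt.comp continuousAt_snd)
  refine (hF.eventually ?_).and (continuousAt_snd.eventually hg)
  exact (hv.eventually (by simp)).mono fun _ h => h.differentiableAt one_ne_zero

theorem pdx_pdx_comp_vertical (hv : ContDiffAt ℝ 2 v (p.1, g p.2))
    (hg : ∀ᶠ y in 𝓝 p.2, HasDerivAt g (g' y) y) :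
    pdx (pdx (fun q => v (q.1, g q.2))) p = pdx (pdx v) (p.1, g p.2) := by
  have hpdx : pdx (fun q => v (q.1, g q.2)) =ᶠ[𝓝 p] fun q => pdx v (q.1, g q.2) :=
    (eventually_differentiableAt_vertical (hv.of_le one_le_two) hg).mono fun q h => pdx_comp_vertical h.1 h.2
  rw [hpdx.pdx.eq_of_nhds]
  exact pdx_comp_vertical hv.differentiableAt_pdx hg.self_of_nhds

theorem pdy_pdy_comp_vertical (hv : ContDiffAt ℝ 2 v (p.1, g p.2))
    (hg : ∀ᶠ y in 𝓝 p.2, HasDerivAt g (g' y) y) (hg' : HasDerivAt g' g'' p.2) :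
    pdy (pdy (fun q => v (q.1, g q.2))) p =
      g' p.2 ^ 2 * pdy (pdy v) (p.1, g p.2) + g'' * pdy v (p.1, g p.2) := by
  have hpdy : pdy (fun q => v (q.1, g q.2)) =ᶠ[𝓝 p] fun q => g' q.2 * pdy v (q.1, g q.2) :=
    (eventually_differentiableAt_vertical (hv.of_le one_le_two) hg).mono fun q h => pdy_comp_vertical h.1 h.2
  have hF : DifferentiableAt ℝ (fun q : ℝ × ℝ => (q.1, g q.2)) p :=
    (hasFDerivAt_vertical hg.self_of_nhds).differentiableAt
  rw [hpdy.pdy.eq_of_nhds, pdy_mul (u := fun q => g' q.2) (w := fun q => pdy v (q.1, g q.2))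
    (hg'.differentiableAt.comp p differentiableAt_snd)
    (DifferentiableAt.comp (g := pdy v) p hv.differentiableAt_pdy hF),
    pdy_comp_snd hg',
    pdy_comp_vertical hv.differentiableAt_pdy hg.self_of_nhds]
  ring

end SecondOrder

section Profile

noncomputable def grushinProfile (a b α x : ℝ) : ℝ :=
  b ^ (-α / (α + 2)) * ((α + 2) / 2 * x) ^ (2 / (α + 2)) - a / b

variable {a b α x : ℝ}

theorem grushinProfile_eq (hb : 0 < b) (hα : -2 < α) (hx : 0 ≤ x) :
    grushinProfile a b α x = ((b * ((α + 2) / 2) * x) ^ (2 / (α + 2)) - a) / b := by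
  have hs : α + 2 ≠ 0 := by linarith
  have hexp : -α / (α + 2) = 2 / (α + 2) - 1 := by field_simp; ring
  rw [grushinProfile, hexp, Real.rpow_sub_one hb.ne', mul_assoc,
    Real.mul_rpow hb.le (mul_nonneg (by linarith) hx)]
  field_simp

theorem hasDerivAt_grushinProfile (hb : 0 < b) (hα : -2 < α) (hx : 0 < x) :
    HasDerivAt (grushinProfile a b α) ((b * ((α + 2) / 2) * x) ^ (-α / (α + 2))) x := by
  have hs : 0 < α + 2 := by linarith
  have hcx : 0 < b * ((α + 2) / 2) * x := by positivity
  have hexp : -α / (α + 2) = 2 / (α + 2) - 1 := by field_simp; ring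
  have hloc : grushinProfile a b α =ᶠ[𝓝 x]
      fun y => ((b * ((α + 2) / 2) * y) ^ (2 / (α + 2)) - a) / b :=
    (lt_mem_nhds hx).mono fun y hy => grushinProfile_eq hb hα hy.le
  refine (((hasDerivAt_const_mul_rpow hcx).sub_const a).div_const b).congr_of_eventuallyEq
    hloc |>.congr_deriv ?_
  rw [hexp, Real.rpow_sub_one hcx.ne']
  field_simp

theorem grushinProfile_pos (ha : 0 ≤ a) (hb : 0 < b) (hα : -2 < α)
    (hx : 2 / (b * (α + 2)) * a ^ ((α + 2) / 2) < x) : 0 < grushinProfile a b α x := by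
  have hs : 0 < α + 2 := by linarith
  have hx0 : 0 < x := (by positivity : 0 ≤ 2 / (b * (α + 2)) * a ^ ((α + 2) / 2)).trans_lt hx
  have hlt : a ^ ((α + 2) / 2) < b * ((α + 2) / 2) * x := by
    rw [div_mul_eq_mul_div, div_lt_iff₀ (by positivity)] at hx
    linarith
  have ha' : a < (b * ((α + 2) / 2) * x) ^ (2 / (α + 2)) := by
    calc a = (a ^ ((α + 2) / 2)) ^ (2 / (α + 2)) := by
          rw [← Real.rpow_mul ha, show (α + 2) / 2 * (2 / (α + 2)) = 1 by field_simp,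
            Real.rpow_one]
      _ < _ := Real.rpow_lt_rpow (by positivity) hlt (by positivity)
  rw [grushinProfile_eq hb hα hx0.le]
  exact div_pos (by linarith) hb

theorem grushinProfile_deriv_sq_mul (hb : 0 < b) (hα : -2 < α) (hx : 0 < x) :
    ((b * ((α + 2) / 2) * x) ^ (-α / (α + 2))) ^ 2 * (a + b * grushinProfile a b α x) ^ α
      = 1 := by
  have hs : 0 < α + 2 := by linarith
  have hcx : 0 < b * ((α + 2) / 2) * x := by positivity
  have hsum : a + b * grushinProfile a b α x = (b * ((α + 2) / 2) * x) ^ (2 / (α + 2)) := by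
    rw [grushinProfile_eq hb hα hx.le]
    field_simp
    ring
  rw [hsum, ← Real.rpow_natCast, ← Real.rpow_mul hcx.le, ← Real.rpow_mul hcx.le,
    ← Real.rpow_add hcx]
  convert Real.rpow_zero _ using 2
  push_cast
  field_simp
  ring

end Profile

/-- Change of variables for the Grushin-type equation: if `v` satisfies
`(a + b η)^α v_{ξξ} + v_{ηη} = 0` in `ℝ × (0,∞)`, then
`ṽ(x₁,x₂) = v(x₁, f(x₂))`, with
`f(x₂) = b^{-α/(α+2)} ((α+2)/2 · x₂)^{2/(α+2)} - a/b`, satisfies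
`ṽ_{11} + ṽ_{22} + (α/(α+2)) x₂⁻¹ ṽ_2 = 0` in `ℝ × (l,∞)`, where
`l = (2/(b(α+2))) a^{(α+2)/2}`. -/
theorem grushin_change_of_variables
    (a b α : ℝ) (ha : 0 ≤ a) (hb : 0 < b) (hα : -2 < α)
    (v vt : ℝ × ℝ → ℝ)
    (hv : ContDiffOn ℝ 2 v {p : ℝ × ℝ | 0 < p.2})
    (heq : ∀ p : ℝ × ℝ, 0 < p.2 →
      (a + b * p.2) ^ α * pdx (pdx v) p + pdy (pdy v) p = 0)
    (hvt : ∀ q : ℝ × ℝ, 2 / (b * (α + 2)) * a ^ ((α + 2) / 2) < q.2 →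
      vt q = v (q.1, b ^ (-α / (α + 2)) * ((α + 2) / 2 * q.2) ^ (2 / (α + 2)) - a / b)) :
    ∀ p : ℝ × ℝ, 2 / (b * (α + 2)) * a ^ ((α + 2) / 2) < p.2 →
      pdx (pdx vt) p + pdy (pdy vt) p + α / (α + 2) * (p.2)⁻¹ * pdy vt p = 0 := by
  intro p hp
  have hs : 0 < α + 2 := by linarith
  set f := grushinProfile a b α
  set f' := fun y => (b * ((α + 2) / 2) * y) ^ (-α / (α + 2))
  have hx : 0 < p.2 := (by positivity : (0 : ℝ) ≤ _).trans_lt hp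
  have hloc : vt =ᶠ[𝓝 p] fun q => v (q.1, f q.2) :=
    (continuousAt_snd.eventually (lt_mem_nhds hp)).mono hvt
  have hf : ∀ᶠ y in 𝓝 p.2, HasDerivAt f (f' y) y :=
    (lt_mem_nhds hx).mono fun y hy => hasDerivAt_grushinProfile hb hα hy
  have hf' : HasDerivAt f' (-α / (α + 2) / p.2 * f' p.2) p.2 :=
    hasDerivAt_const_mul_rpow (by positivity)
  have hv2 : ContDiffAt ℝ 2 v (p.1, f p.2) :=
    hv.contDiffAt ((isOpen_lt continuous_const continuous_snd).mem_nhds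
      (grushinProfile_pos ha hb hα hp))
  rw [hloc.pdx.pdx.eq_of_nhds, hloc.pdy.pdy.eq_of_nhds, hloc.pdy.eq_of_nhds,
    pdx_pdx_comp_vertical hv2 hf, pdy_pdy_comp_vertical hv2 hf hf',
    pdy_comp_vertical (hv2.differentiableAt two_ne_zero) hf.self_of_nhds]
  linear_combination f' p.2 ^ 2 * heq (p.1, f p.2) (grushinProfile_pos ha hb hα hp)
    - pdx (pdx v) (p.1, f p.2) * grushinProfile_deriv_sq_mul hb hα hx
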